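/- With the two-variable two-bridge setup, let (m₀, u₀) ∈ ℂ² with m₀ ∉ {0} and φ_W(m₀, u₀) = 0. Then the partial derivatives of the matrix-valued function R(m, u) = W·A·W⁻¹·B⁻¹ at (m₀, u₀) satisfy ∂R/∂m (m₀,u₀) = (∂φ_W/∂m)(m₀,u₀) · M(m₀,u₀) and ∂R/∂u (m₀,u₀) = (∂φ_W/∂u)(m₀,u₀) · M(m₀,u₀), where M(m,u) = [[W₁₁u − W₂₁m⁻¹, W₁₁m], [W₂₁u + W₂₂um⁻¹, W₂₁m]]. -/

import Mathlib

/-!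
The diagonal matrix `D = diag(1, -u)` intertwines `A` with `Bᵀ` and `B` with `Aᵀ`. Since `p` is
odd and `ε_{p-i} = ε_i`, reversing the word `W` and exchanging `A` and `B` gives `W` back, so
`W D = D Wᵀ`, i.e. `W₂₁ = -u W₁₂`. Together with `det W = 1` this turns `R = W A W⁻¹ B⁻¹` into
`I + φ_W · M` by a direct `2 × 2` computation (for `m ≠ 0`). Differentiating along either
coordinate line at a zero of `φ_W`, the term `φ_W · ∂M` vanishes.
-/

open Matrix

/-- `ε_i = (−1)^⌊iq/p⌋`. -/
def eps (p : ℕ) (q : ℤ) (i : ℕ) : ℤ :=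
  if ((i : ℤ) * q).fdiv p % 2 = 0 then 1 else -1

/-- `A(m,u) = [[m, 1], [0, m⁻¹]]`. -/
noncomputable def Amat (m : ℂ) : Matrix (Fin 2) (Fin 2) ℂ := !![m, 1; 0, m⁻¹]

/-- `B(m,u) = [[m, 0], [−u, m⁻¹]]`. -/
noncomputable def Bmat (m u : ℂ) : Matrix (Fin 2) (Fin 2) ℂ := !![m, 0; -u, m⁻¹]

/-- `W(m,u) = A^{ε₁}·B^{ε₂}·⋯·A^{ε_{p−2}}·B^{ε_{p−1}}`. -/
noncomputable def Wmat (p : ℕ) (q : ℤ) (m u : ℂ) : Matrix (Fin 2) (Fin 2) ℂ :=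
  ((List.range (p - 1)).map
    (fun i => (if (i + 1) % 2 = 1 then Amat m else Bmat m u) ^ eps p q (i + 1))).prod

/-- `R(m,u) = W·A·W⁻¹·B⁻¹`. -/
noncomputable def Rmat (p : ℕ) (q : ℤ) (m u : ℂ) : Matrix (Fin 2) (Fin 2) ℂ :=
  Wmat p q m u * Amat m * (Wmat p q m u)⁻¹ * (Bmat m u)⁻¹

/-- The two-variable Riley polynomial `φ_W(m,u) = W₁₁ − (m − m⁻¹)W₁₂`. -/
noncomputable def phiW (p : ℕ) (q : ℤ) (m u : ℂ) : ℂ :=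
  Wmat p q m u 0 0 - (m - m⁻¹) * Wmat p q m u 0 1

/-- `M(m,u) = [[W₁₁u − W₂₁m⁻¹, W₁₁m], [W₂₁u + W₂₂um⁻¹, W₂₁m]]`. -/
noncomputable def Mmat (p : ℕ) (q : ℤ) (m u : ℂ) : Matrix (Fin 2) (Fin 2) ℂ :=
  !![Wmat p q m u 0 0 * u - Wmat p q m u 1 0 * m⁻¹, Wmat p q m u 0 0 * m;
     Wmat p q m u 1 0 * u + Wmat p q m u 1 1 * u * m⁻¹, Wmat p q m u 1 0 * m]

theorem Matrix.det_zpow_of_det_eq_one {n R : Type*} [Fintype n] [DecidableEq n] [CommRing R]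
    {A : Matrix n n R} (h : A.det = 1) (k : ℤ) : (A ^ k).det = 1 := by
  cases k with
  | ofNat k => simp [det_pow, h]
  | negSucc k => simp [zpow_negSucc, det_nonsing_inv, det_pow, h]

theorem Matrix.inv_eq_adjugate_of_det_eq_one {n R : Type*} [Fintype n] [DecidableEq n]
    [CommRing R] {A : Matrix n n R} (h : A.det = 1) : A⁻¹ = A.adjugate := by
  simp [inv_def, h]

theorem SemiconjBy.list_prod_map {M ι : Type*} [Monoid M] {a : M} {f g : ι → M} {l : List ι}
    (h : ∀ i ∈ l, SemiconjBy a (f i) (g i)) : SemiconjBy a (l.map f).prod (l.map g).prod := by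
  induction l with
  | nil => exact SemiconjBy.one_right a
  | cons i l ih =>
    exact (h i List.mem_cons_self).mul_right (ih fun j hj => h j (List.mem_cons_of_mem i hj))

section EntrywiseDifferentiability

variable {𝕜 : Type*} [NontriviallyNormedField 𝕜] {n : Type*} [Fintype n]
  {F G : 𝕜 → Matrix n n 𝕜} {t : 𝕜}

theorem differentiableAt_mul_apply (hF : ∀ a b, DifferentiableAt 𝕜 (fun s => F s a b) t)
    (hG : ∀ a b, DifferentiableAt 𝕜 (fun s => G s a b) t) (a b : n) :
    DifferentiableAt 𝕜 (fun s => (F s * G s) a b) t := by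
  simp only [mul_apply]
  exact DifferentiableAt.fun_sum fun c _ => (hF a c).mul (hG c b)

variable [DecidableEq n]

theorem differentiableAt_det_of_apply (hF : ∀ a b, DifferentiableAt 𝕜 (fun s => F s a b) t) :
    DifferentiableAt 𝕜 (fun s => (F s).det) t := by
  simp only [det_apply, Units.smul_def]
  fun_prop

theorem differentiableAt_adjugate_apply (hF : ∀ a b, DifferentiableAt 𝕜 (fun s => F s a b) t)
    (a b : n) : DifferentiableAt 𝕜 (fun s => (F s).adjugate a b) t := by
  simp only [adjugate_apply]
  refine differentiableAt_det_of_apply fun i j => ?_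
  simp only [updateRow_apply]
  split_ifs
  · exact differentiableAt_const _
  · exact hF i j

theorem differentiableAt_inv_apply (hF : ∀ a b, DifferentiableAt 𝕜 (fun s => F s a b) t)
    (hdet : (F t).det ≠ 0) (a b : n) : DifferentiableAt 𝕜 (fun s => (F s)⁻¹ a b) t := by
  simp only [inv_def, Ring.inverse_eq_inv', Matrix.smul_apply, smul_eq_mul]
  exact ((differentiableAt_det_of_apply hF).inv hdet).mul (differentiableAt_adjugate_apply hF a b)

theorem differentiableAt_pow_apply (hF : ∀ a b, DifferentiableAt 𝕜 (fun s => F s a b) t)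
    (k : ℕ) (a b : n) : DifferentiableAt 𝕜 (fun s => (F s ^ k) a b) t := by
  induction k generalizing a b with
  | zero => simpa only [pow_zero] using differentiableAt_const _
  | succ k ih => simpa only [pow_succ] using differentiableAt_mul_apply ih hF a b

theorem differentiableAt_zpow_apply (hF : ∀ a b, DifferentiableAt 𝕜 (fun s => F s a b) t)
    (hdet : (F t).det ≠ 0) (k : ℤ) (a b : n) :
    DifferentiableAt 𝕜 (fun s => (F s ^ k) a b) t := by
  cases k with
  | ofNat k =>
    simpa only [Int.ofNat_eq_natCast, zpow_natCast] using differentiableAt_pow_apply hF k a b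
  | negSucc k =>
    simp only [zpow_negSucc]
    exact differentiableAt_inv_apply (differentiableAt_pow_apply hF _)
      (by simpa [det_pow] using hdet) a b

theorem differentiableAt_list_prod_apply {ι : Type*} {l : List ι} {F : ι → 𝕜 → Matrix n n 𝕜}
    (hF : ∀ i ∈ l, ∀ a b, DifferentiableAt 𝕜 (fun s => F i s a b) t) (a b : n) :
    DifferentiableAt 𝕜 (fun s => (l.map (F · s)).prod a b) t := by
  induction l generalizing a b with
  | nil => simpa only [List.map_nil, List.prod_nil] using differentiableAt_const _
  | cons i l ih =>
    simp only [List.map_cons, List.prod_cons]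
    exact differentiableAt_mul_apply (hF i List.mem_cons_self)
      (ih fun j hj => hF j (List.mem_cons_of_mem i hj)) a b

end EntrywiseDifferentiability

theorem Int.ediv_mul_sub_add_ediv {n a : ℤ} (b : ℤ) (hn : 0 < n) (ha : ¬ n ∣ a) :
    (n * b - a) / n + a / n = b - 1 := by
  rw [sub_eq_neg_add, Int.add_mul_ediv_left _ _ hn.ne', Int.neg_ediv, if_neg ha,
    Int.sign_eq_one_of_pos hn]
  ring

theorem eps_sub {p : ℕ} {q : ℤ} (hq : Odd q) (hpq : IsCoprime (p : ℤ) q) {i : ℕ}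
    (hi : 0 < i) (hip : i < p) : eps p q (p - i) = eps p q i := by
  have hp : (0 : ℤ) < p := by omega
  have hndvd : ¬ (p : ℤ) ∣ i * q := fun h =>
    absurd (Int.le_of_dvd (by omega) (hpq.dvd_of_dvd_mul_right h)) (by omega)
  have hsum := Int.ediv_mul_sub_add_ediv q hp hndvd
  have hq2 := Int.odd_iff.mp hq
  have hcast : ((p - i : ℕ) : ℤ) * q = p * q - i * q := by
    rw [Nat.cast_sub hip.le]; ring
  simp only [eps, Int.fdiv_eq_ediv_of_nonneg _ hp.le, hcast]
  split_ifs <;> omega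

theorem det_Amat {m : ℂ} (hm : m ≠ 0) : (Amat m).det = 1 := by
  simp [Amat, det_fin_two_of, hm]

theorem det_Bmat {m : ℂ} (hm : m ≠ 0) (u : ℂ) : (Bmat m u).det = 1 := by
  simp [Bmat, det_fin_two_of, hm]

theorem semiconjBy_Amat (m u : ℂ) :
    SemiconjBy (diagonal ![1, -u]) (Bmat m u)ᵀ (Amat m) := by
  rw [SemiconjBy]; ext i j; fin_cases i <;> fin_cases j <;> simp [Amat, Bmat, mul_comm]

theorem semiconjBy_Bmat (m u : ℂ) :
    SemiconjBy (diagonal ![1, -u]) (Amat m)ᵀ (Bmat m u) := by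
  rw [SemiconjBy]; ext i j; fin_cases i <;> fin_cases j <;> simp [Amat, Bmat, mul_comm]

/-- `W` is the product of the factors `Wletter m u (i + 1) ^ ε_{i+1}`; exchanging `A` and `B`
is the shift `j ↦ j + 1`. -/
noncomputable def Wletter (m u : ℂ) (j : ℕ) : Matrix (Fin 2) (Fin 2) ℂ :=
  if j % 2 = 1 then Amat m else Bmat m u

section Word

variable {p : ℕ} {q : ℤ} {m u : ℂ}

theorem det_Wletter (hm : m ≠ 0) (j : ℕ) : (Wletter m u j).det = 1 := by
  unfold Wletter; split_ifs
  exacts [det_Amat hm, det_Bmat hm u]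

theorem semiconjBy_Wletter (j : ℕ) :
    SemiconjBy (diagonal ![1, -u]) (Wletter m u j)ᵀ (Wletter m u (j + 1)) := by
  by_cases hj : j % 2 = 1
  · simpa [Wletter, hj, Nat.succ_mod_two_eq_zero_iff.mpr hj] using semiconjBy_Bmat m u
  · simpa [Wletter, hj, show (j + 1) % 2 = 1 by omega] using semiconjBy_Amat m u

theorem det_Wmat (hm : m ≠ 0) : (Wmat p q m u).det = 1 := by
  rw [Wmat, ← coe_detMonoidHom, map_list_prod, List.map_map]
  refine List.prod_eq_one fun x hx => ?_
  obtain ⟨i, -, rfl⟩ := List.mem_map.mp hx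
  exact det_zpow_of_det_eq_one (det_Wletter hm (i + 1)) _

theorem Wmat_transpose (hp : Odd p) (hq : Odd q) (hpq : IsCoprime (p : ℤ) q) :
    (Wmat p q m u)ᵀ =
      ((List.range (p - 1)).map fun k => (Wletter m u k ^ eps p q (k + 1))ᵀ).prod := by
  rw [Wmat, transpose_list_prod, List.map_map, ← List.map_reverse, List.range_eq_range',
    List.reverse_range', List.map_map, ← List.range_eq_range']
  congr 1
  refine List.map_congr_left fun k hk => ?_
  have hk := List.mem_range.mp hk
  have hp2 := Nat.odd_iff.mp hp
  have hε : eps p q (p - 2 - k + 1) = eps p q (k + 1) := by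
    rw [show p - 2 - k + 1 = p - (k + 1) by omega]
    exact eps_sub hq hpq (by omega) (by omega)
  have hparity : (p - 2 - k + 1) % 2 = k % 2 := by omega
  simp only [Function.comp_apply, show 0 + (p - 1) - 1 - k = p - 2 - k by omega, hε, hparity,
    Wletter]

theorem semiconjBy_Wmat (hp : Odd p) (hq : Odd q) (hpq : IsCoprime (p : ℤ) q) (hm : m ≠ 0) :
    SemiconjBy (diagonal ![1, -u]) (Wmat p q m u)ᵀ (Wmat p q m u) := by
  rw [Wmat_transpose hp hq hpq]
  refine SemiconjBy.list_prod_map fun k _ => ?_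
  have hunit (j : ℕ) : IsUnit (Wletter m u j).det := by simp [det_Wletter hm]
  rw [transpose_zpow]
  exact Matrix.SemiconjBy.zpow_right (by simpa using hunit k) (hunit (k + 1))
    (semiconjBy_Wletter k) _

theorem Wmat_one_zero (hp : Odd p) (hq : Odd q) (hpq : IsCoprime (p : ℤ) q) (hm : m ≠ 0) :
    Wmat p q m u 1 0 = -u * Wmat p q m u 0 1 := by
  simpa using (congrFun (congrFun (semiconjBy_Wmat (u := u) hp hq hpq hm) 1) 0).symm

end Word

theorem conj_Amat_mul_inv_Bmat {W : Matrix (Fin 2) (Fin 2) ℂ} {m u : ℂ} (hm : m ≠ 0)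
    (hdet : W.det = 1) (hW : W 1 0 = -u * W 0 1) :
    W * Amat m * W⁻¹ * (Bmat m u)⁻¹ = 1 + (W 0 0 - (m - m⁻¹) * W 0 1) •
      !![W 0 0 * u - W 1 0 * m⁻¹, W 0 0 * m; W 1 0 * u + W 1 1 * u * m⁻¹, W 1 0 * m] := by
  rw [inv_eq_adjugate_of_det_eq_one hdet, inv_eq_adjugate_of_det_eq_one (det_Bmat hm u),
    adjugate_fin_two, Bmat, adjugate_fin_two_of, Amat]
  rw [det_fin_two, hW] at hdet
  ext i j
  fin_cases i <;> fin_cases j <;>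
    simp only [Fin.isValue, Fin.zero_eta, Fin.mk_one, Matrix.add_apply, mul_apply,
      Fin.sum_univ_two, of_apply, cons_val', cons_val_zero, cons_val_one, cons_val_fin_one,
      smul_of, smul_cons, smul_empty, smul_eq_mul, one_apply_eq, one_apply_ne, ne_eq, zero_ne_one,
      one_ne_zero, not_false_eq_true, hW] <;>
    field_simp
  · linear_combination m ^ 2 * hdet
  · ring
  · ring
  · linear_combination m * hdet

theorem Rmat_eq {p : ℕ} {q : ℤ} (hp : Odd p) (hq : Odd q) (hpq : IsCoprime (p : ℤ) q) {m : ℂ}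
    (hm : m ≠ 0) (u : ℂ) : Rmat p q m u = 1 + phiW p q m u • Mmat p q m u :=
  conj_Amat_mul_inv_Bmat hm (det_Wmat hm) (Wmat_one_zero hp hq hpq hm)

section Curve

variable {p : ℕ} {q : ℤ} {m u : ℂ → ℂ} {t : ℂ}

theorem differentiableAt_Wletter_apply (hm : DifferentiableAt ℂ m t) (hm0 : m t ≠ 0)
    (hu : DifferentiableAt ℂ u t) (j : ℕ) (a b : Fin 2) :
    DifferentiableAt ℂ (fun s => Wletter (m s) (u s) j a b) t := by
  unfold Wletter Amat Bmat
  split_ifs <;> fin_cases a <;> fin_cases b <;>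
    simp only [Fin.isValue, Fin.zero_eta, Fin.mk_one, of_apply, cons_val',
      cons_val_zero, cons_val_one, cons_val_fin_one] <;>
    fun_prop (disch := assumption)

theorem differentiableAt_Wmat_apply (hm : DifferentiableAt ℂ m t) (hm0 : m t ≠ 0)
    (hu : DifferentiableAt ℂ u t) (a b : Fin 2) :
    DifferentiableAt ℂ (fun s => Wmat p q (m s) (u s) a b) t :=
  differentiableAt_list_prod_apply
    (F := fun i s => Wletter (m s) (u s) (i + 1) ^ eps p q (i + 1))
    (fun i _ => differentiableAt_zpow_apply (differentiableAt_Wletter_apply hm hm0 hu (i + 1))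
      (by simp [det_Wletter hm0]) _) a b

theorem differentiableAt_phiW (hm : DifferentiableAt ℂ m t) (hm0 : m t ≠ 0)
    (hu : DifferentiableAt ℂ u t) : DifferentiableAt ℂ (fun s => phiW p q (m s) (u s)) t := by
  have := differentiableAt_Wmat_apply (p := p) (q := q) hm hm0 hu
  unfold phiW
  fun_prop (disch := assumption)

theorem differentiableAt_Mmat_apply (hm : DifferentiableAt ℂ m t) (hm0 : m t ≠ 0)
    (hu : DifferentiableAt ℂ u t) (a b : Fin 2) :
    DifferentiableAt ℂ (fun s => Mmat p q (m s) (u s) a b) t := by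
  have := differentiableAt_Wmat_apply (p := p) (q := q) hm hm0 hu
  unfold Mmat
  fin_cases a <;> fin_cases b <;>
    simp only [Fin.isValue, Fin.zero_eta, Fin.mk_one, of_apply, cons_val',
      cons_val_zero, cons_val_one, cons_val_fin_one] <;>
    fun_prop (disch := assumption)

theorem deriv_Rmat_apply (hp : Odd p) (hq : Odd q) (hpq : IsCoprime (p : ℤ) q)
    (hm : DifferentiableAt ℂ m t) (hm0 : m t ≠ 0) (hu : DifferentiableAt ℂ u t)
    (hφ : phiW p q (m t) (u t) = 0) (i j : Fin 2) :
    deriv (fun s => Rmat p q (m s) (u s) i j) t =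
      deriv (fun s => phiW p q (m s) (u s)) t * Mmat p q (m t) (u t) i j := by
  have hR : (fun s => Rmat p q (m s) (u s) i j) =ᶠ[nhds t]
      fun s => (1 : Matrix (Fin 2) (Fin 2) ℂ) i j +
        phiW p q (m s) (u s) * Mmat p q (m s) (u s) i j := by
    filter_upwards [hm.continuousAt.eventually_ne hm0] with s hs
    rw [Rmat_eq hp hq hpq hs]
    rfl
  rw [hR.deriv_eq, deriv_const_add, deriv_fun_mul (differentiableAt_phiW hm hm0 hu)
    (differentiableAt_Mmat_apply hm hm0 hu i j), hφ, zero_mul, add_zero]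

end Curve

theorem stmt_14_general (p : ℕ) (q : ℤ) (hp : Odd p) (hq : Odd q)
    (hpq : IsCoprime (p : ℤ) q)
    (m₀ u₀ : ℂ) (hm : m₀ ≠ 0) (hphi : phiW p q m₀ u₀ = 0) :
    ∀ i j : Fin 2,
      deriv (fun m => Rmat p q m u₀ i j) m₀ =
        deriv (fun m => phiW p q m u₀) m₀ * Mmat p q m₀ u₀ i j ∧
      deriv (fun u => Rmat p q m₀ u i j) u₀ =
        deriv (fun u => phiW p q m₀ u) u₀ * Mmat p q m₀ u₀ i j := fun i j =>
  ⟨deriv_Rmat_apply (m := fun s => s) (u := fun _ => u₀) hp hq hpq differentiableAt_id hm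
      (differentiableAt_const _) hphi i j,
    deriv_Rmat_apply (m := fun _ => m₀) (u := fun s => s) hp hq hpq (differentiableAt_const _) hm
      differentiableAt_id hphi i j⟩

theorem stmt_14 (p : ℕ) (q : ℤ) (hp : Odd p) (hq : Odd q)
    (hpq : IsCoprime (p : ℤ) q) (hp3 : 3 ≤ p)
    (hql : -(p : ℤ) < q) (hqu : q < (p : ℤ))
    (m₀ u₀ : ℂ) (hm : m₀ ≠ 0) (hphi : phiW p q m₀ u₀ = 0) :
    ∀ i j : Fin 2,
      deriv (fun m => Rmat p q m u₀ i j) m₀ =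
        deriv (fun m => phiW p q m u₀) m₀ * Mmat p q m₀ u₀ i j ∧
      deriv (fun u => Rmat p q m₀ u i j) u₀ =
        deriv (fun u => phiW p q m₀ u) u₀ * Mmat p q m₀ u₀ i j :=
  stmt_14_general p q hp hq hpq m₀ u₀ hm hphi
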